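/- Let d ≥ 1, R₀ > 0, p ≥ 1, and let f₁, …, f_p : (0, R₀²) → ℝ be continuous functions that are linearly independent (over ℝ) as functions on (0, R₀²). Let X ∈ ℝ^p and suppose that for Lebesgue-almost every x = (x^{(1)},…,x^{(d)}) in the open ball B(0,R₀) ⊂ ℝ^d one has (∑_{k=1}^d x^{(k)}) · (∑_{i=1}^p X_i f_i(‖x‖²)) = 0. Then X = 0. -/

import Mathlib

open MeasureTheory Set Metric

/-!
With `g := ∑ i, X i • f i`, the hypothesis says that the function
`x ↦ (∑ k, x k) * g (‖x‖ ^ 2)` vanishes a.e. on the ball. It is continuous on the punctured ball,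
so it vanishes there identically. Evaluating at `x = single k √t` gives `g t = 0` for every
`t ∈ (0, R₀²)`, and linear independence of the `f i` on that interval forces `X = 0`.
-/

section Radial

variable {ι : Type*} [Fintype ι] {R : ℝ} {g : ℝ → ℝ}

theorem continuousOn_sum_mul_comp_norm_sq (hg : ContinuousOn g (Ioo 0 (R ^ 2))) :
    ContinuousOn (fun x : EuclideanSpace ℝ ι => (∑ k, x k) * g (‖x‖ ^ 2))
      (ball 0 R \ {0}) := by
  have hmaps : MapsTo (fun x : EuclideanSpace ℝ ι => ‖x‖ ^ 2) (ball 0 R \ {0})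
      (Ioo 0 (R ^ 2)) := by
    rintro x ⟨hx, hx0 : x ≠ 0⟩
    rw [mem_ball_zero_iff] at hx
    exact ⟨by positivity, pow_lt_pow_left₀ hx (norm_nonneg x) two_ne_zero⟩
  exact (continuous_finsetSum _ fun k _ => (EuclideanSpace.proj k).continuous).continuousOn.mul
    (hg.comp (by fun_prop) hmaps)

theorem sum_mul_comp_norm_sq_eq_zero_of_ae (hg : ContinuousOn g (Ioo 0 (R ^ 2)))
    (h : ∀ᵐ x ∂(volume.restrict (ball (0 : EuclideanSpace ℝ ι) R)),
      (∑ k, x k) * g (‖x‖ ^ 2) = 0) :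
    ∀ x ∈ ball (0 : EuclideanSpace ℝ ι) R \ {0}, (∑ k, x k) * g (‖x‖ ^ 2) = 0 :=
  Measure.eqOn_open_of_ae_eq (ae_restrict_of_ae_restrict_of_subset sdiff_subset h)
    (isOpen_ball.sdiff isClosed_singleton) (continuousOn_sum_mul_comp_norm_sq hg)
    continuousOn_const

theorem eqOn_zero_of_ae_sum_mul_comp_norm_sq_eq_zero [Nonempty ι] (hR : 0 < R)
    (hg : ContinuousOn g (Ioo 0 (R ^ 2)))
    (h : ∀ᵐ x ∂(volume.restrict (ball (0 : EuclideanSpace ℝ ι) R)),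
      (∑ k, x k) * g (‖x‖ ^ 2) = 0) :
    EqOn g 0 (Ioo 0 (R ^ 2)) := by
  classical
  intro t ⟨ht0, htR⟩
  obtain ⟨k⟩ := ‹Nonempty ι›
  set x := EuclideanSpace.single k (√t)
  have hsqrt : 0 < √t := Real.sqrt_pos.mpr ht0
  have hnorm : ‖x‖ = √t := by simp [x, hsqrt.le]
  have hsum : ∑ j, x j = √t := by simp [x, PiLp.single_apply]
  have hx : x ∈ ball (0 : EuclideanSpace ℝ ι) R \ {0} := by
    refine ⟨?_, norm_pos_iff.mp (hnorm ▸ hsqrt)⟩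
    rw [mem_ball_zero_iff, hnorm]
    exact (Real.sqrt_lt' hR).mpr htR
  have := sum_mul_comp_norm_sq_eq_zero_of_ae hg h x hx
  rwa [hsum, hnorm, Real.sq_sqrt ht0.le, mul_eq_zero, or_iff_right hsqrt.ne'] at this

end Radial

theorem identification_ball_general
    (d : ℕ) (hd : 1 ≤ d) (R₀ : ℝ) (hR₀ : 0 < R₀) (p : ℕ)
    (f : Fin p → ℝ → ℝ)
    (hcont : ∀ i, ContinuousOn (f i) (Set.Ioo 0 (R₀ ^ 2)))
    (hindep : LinearIndependent ℝ fun i => (Set.Ioo (0:ℝ) (R₀ ^ 2)).restrict (f i))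
    (X : Fin p → ℝ)
    (h : ∀ᵐ x ∂(volume.restrict (Metric.ball (0 : EuclideanSpace ℝ (Fin d)) R₀)),
      (∑ k, x k) * (∑ i, X i * f i (‖x‖ ^ 2)) = 0) :
    X = 0 := by
  have : Nonempty (Fin d) := ⟨⟨0, hd⟩⟩
  have hg : ContinuousOn (fun t => ∑ i, X i * f i t) (Ioo 0 (R₀ ^ 2)) :=
    continuousOn_finsetSum _ fun i _ => continuousOn_const.mul (hcont i)
  have hzero := eqOn_zero_of_ae_sum_mul_comp_norm_sq_eq_zero hR₀ hg h
  funext i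
  refine Fintype.linearIndependent_iff.mp hindep X ?_ i
  funext t
  simp only [Finset.sum_apply, Pi.smul_apply, smul_eq_mul, Pi.zero_apply]
  exact hzero t.2

/-- Identification step: if `f₁, …, f_p` are continuous and linearly
independent functions on `(0, R₀²)` and, for Lebesgue-a.e. `x` in the ball
`B(0,R₀) ⊂ ℝ^d`, `(∑_k x^(k)) · (∑_i X_i f_i(‖x‖²)) = 0`, then `X = 0`. -/
theorem identification_ball
    (d : ℕ) (hd : 1 ≤ d) (R₀ : ℝ) (hR₀ : 0 < R₀) (p : ℕ) (hp : 1 ≤ p)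
    (f : Fin p → ℝ → ℝ)
    (hcont : ∀ i, ContinuousOn (f i) (Set.Ioo 0 (R₀ ^ 2)))
    (hindep : LinearIndependent ℝ fun i => (Set.Ioo (0:ℝ) (R₀ ^ 2)).restrict (f i))
    (X : Fin p → ℝ)
    (h : ∀ᵐ x ∂(volume.restrict (Metric.ball (0 : EuclideanSpace ℝ (Fin d)) R₀)),
      (∑ k, x k) * (∑ i, X i * f i (‖x‖ ^ 2)) = 0) :
    X = 0 :=
  identification_ball_general d hd R₀ hR₀ p f hcont hindep X h
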